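/- Every normal subgroup of ZM(m,n,r) is of the form ⟨a^{m₁}, b^{n₁}⟩ for some divisors n₁ | n and m₁ | gcd(m, r^{n₁} − 1); conversely each such subgroup is normal. In particular, for each pair (m₁, n₁) with m₁ | m and n₁ | n, ZM(m,n,r) has at most one normal subgroup of order mn/(m₁n₁). -/

import Mathlib

def ZMrels (m n : ℕ) (r : ℤ) : Set (FreeGroup Bool) :=
  {FreeGroup.of true ^ m, FreeGroup.of false ^ n,
   (FreeGroup.of false)⁻¹ * FreeGroup.of true * FreeGroup.of false * (FreeGroup.of true) ^ (-r)}

abbrev ZM (m n : ℕ) (r : ℤ) : Type := PresentedGroup (ZMrels m n r)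

def ZMa (m n : ℕ) (r : ℤ) : ZM m n r := PresentedGroup.of true

def ZMb (m n : ℕ) (r : ℤ) : ZM m n r := PresentedGroup.of false

/-
Since `b⁻¹ a b = a ^ r` and `b` has finite order, `b ^ j a = a ^ (r ^ e) b ^ j` for some `e`, so
every element of `⟨a ^ k, b ^ l⟩` has the form `a ^ (k i) b ^ (l j)`. As `r ^ n ≡ 1 (mod m)`, the
group acts on `ZMod m` by `a ↦ (· + 1)`, `b ↦ (r⁻¹ * ·)`, so `a` has order `m`; the projection to
`ZMod n` shows that `b` has order `n` and `⟨a⟩ ∩ ⟨b⟩ = 1`. Hence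
`|⟨a ^ k, b ^ l⟩| = (m / k) (n / l)`.

For a normal subgroup `H`, let `k` generate the exponents `i` with `a ^ i ∈ H` and `l` those `j`
with `b ^ j ∈ ⟨a⟩ H`. Some `a ^ s b ^ l` lies in `H`; conjugating it by `b` puts `a ^ ((r - 1) s)`
in `H`, so `k ∣ s` because `gcd (m, r - 1) = 1`. Thus `b ^ l ∈ H`, and conjugating `a` by `b ^ l`
gives `k ∣ r ^ l - 1`. As `gcd (m, n) = 1`, the order `(m / k) (n / l)` determines `k` and `l`.
-/

open Subgroup Pointwise

section Subgroup

variable {G : Type*} [Group G]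

theorem mem_normalizer_closure_of_conj_mem [Finite G] {S : Set G} {g : G}
    (h : ∀ s ∈ S, g * s * g⁻¹ ∈ closure S) : g ∈ normalizer (closure S : Set G) :=
  mem_normalizer_fintype fun _ hx =>
    (closure_le ((closure S).comap (MulAut.conj g).toMonoidHom)).2 h hx

theorem Subgroup.exists_zpow_mem_iff_dvd (H : Subgroup G) (a : G) :
    ∃ k : ℕ, ∀ i : ℤ, a ^ i ∈ H ↔ (k : ℤ) ∣ i := by
  obtain ⟨c, hc⟩ :=
    Int.subgroup_cyclic (H.toAddSubgroup.comap (zmultiplesHom _ (Additive.ofMul a)))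
  refine ⟨c.natAbs, fun i => ?_⟩
  rw [Int.natAbs_dvd, ← Int.mem_zmultiples_iff, AddSubgroup.zmultiples_eq_closure, ← hc]
  rfl

theorem Subgroup.mem_zpowers_sup_iff {H : Subgroup G} [H.Normal] {a g : G} :
    g ∈ zpowers a ⊔ H ↔ ∃ i : ℤ, a ^ i * g ∈ H := by
  rw [← SetLike.mem_coe, mul_normal, Set.mem_mul]
  constructor
  · rintro ⟨_, ⟨i, rfl⟩, h, hh, rfl⟩
    exact ⟨-i, by simpa [← mul_assoc]⟩
  · rintro ⟨i, hi⟩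
    exact ⟨_, ⟨-i, rfl⟩, _, hi, by group⟩

end Subgroup

section Metacyclic

variable {G : Type*} [Group G] {a b : G} {r : ℤ}

theorem inv_mul_zpow_mul (hab : b⁻¹ * a * b = a ^ r) (i : ℤ) :
    b⁻¹ * a ^ i * b = a ^ (r * i) := by
  simpa [zpow_mul, ← hab] using (conj_zpow (a := b⁻¹) (b := a) (i := i)).symm

theorem inv_pow_mul_zpow_mul_pow (hab : b⁻¹ * a * b = a ^ r) (k : ℕ) (i : ℤ) :
    (b ^ k)⁻¹ * a ^ i * b ^ k = a ^ (r ^ k * i) := by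
  induction k generalizing i with
  | zero => simp
  | succ k ih =>
    calc (b ^ (k + 1))⁻¹ * a ^ i * b ^ (k + 1)
        = (b ^ k)⁻¹ * (b⁻¹ * a ^ i * b) * b ^ k := by group
      _ = a ^ (r ^ (k + 1) * i) := by rw [inv_mul_zpow_mul hab, ih, pow_succ, mul_assoc]

theorem mul_pow_mul_inv (hab : b⁻¹ * a * b = a ^ r) (l : ℕ) :
    a * b ^ l * a⁻¹ = b ^ l * a ^ (r ^ l - 1) := by
  rw [zpow_sub_one, ← mul_one (r ^ l), ← inv_pow_mul_zpow_mul_pow hab l 1]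
  group

theorem exists_zpow_mul_zpow_eq_zpow_mul_zpow (hab : b⁻¹ * a * b = a ^ r) (hb : IsOfFinOrder b)
    (i j : ℤ) : ∃ i' : ℤ, b ^ j * a ^ i = a ^ i' * b ^ j := by
  obtain ⟨e, he : b ^ e = b ^ (-j)⟩ : b ^ (-j) ∈ Submonoid.powers b :=
    hb.mem_powers_iff_mem_zpowers.2 ⟨-j, rfl⟩
  have hbj : b ^ j = (b ^ e)⁻¹ := by rw [he, zpow_neg, inv_inv]
  refine ⟨r ^ e * i, ?_⟩
  rw [← inv_pow_mul_zpow_mul_pow hab, hbj]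
  group

theorem coe_closure_pair_eq_zpowers_mul_zpowers (hab : b⁻¹ * a * b = a ^ r)
    (hb : IsOfFinOrder b) : (closure {a, b} : Set G) = (zpowers a : Set G) * zpowers b := by
  refine subset_antisymm (fun g hg => ?_) (Set.mul_subset_iff.2 fun x hx y hy =>
    mul_mem (zpowers_le.2 (subset_closure (by simp)) hx)
      (zpowers_le.2 (subset_closure (by simp)) hy))
  simp only [Set.mem_mul, mem_zpowers_iff, SetLike.mem_coe] at hg ⊢
  induction hg using closure_induction with
  | mem x hx =>
    rcases hx with rfl | rfl
    · exact ⟨_, ⟨1, rfl⟩, _, ⟨0, rfl⟩, by simp⟩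
    · exact ⟨_, ⟨0, rfl⟩, _, ⟨1, rfl⟩, by simp⟩
  | one => exact ⟨_, ⟨0, rfl⟩, _, ⟨0, rfl⟩, by simp⟩
  | mul x y _ _ hx hy =>
    obtain ⟨_, ⟨i, rfl⟩, _, ⟨j, rfl⟩, rfl⟩ := hx
    obtain ⟨_, ⟨i', rfl⟩, _, ⟨j', rfl⟩, rfl⟩ := hy
    obtain ⟨i'', h⟩ := exists_zpow_mul_zpow_eq_zpow_mul_zpow hab hb i' j
    refine ⟨_, ⟨i + i'', rfl⟩, _, ⟨j + j', rfl⟩, ?_⟩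
    calc a ^ (i + i'') * b ^ (j + j') = a ^ i * (a ^ i'' * b ^ j) * b ^ j' := by
          rw [zpow_add, zpow_add]; group
      _ = a ^ i * b ^ j * (a ^ i' * b ^ j') := by rw [← h]; group
  | inv x _ hx =>
    obtain ⟨_, ⟨i, rfl⟩, _, ⟨j, rfl⟩, rfl⟩ := hx
    obtain ⟨i', h⟩ := exists_zpow_mul_zpow_eq_zpow_mul_zpow hab hb (-i) (-j)
    refine ⟨_, ⟨i', rfl⟩, _, ⟨-j, rfl⟩, ?_⟩
    rw [← h]
    group

theorem card_closure_pair_eq_orderOf_mul_orderOf (hab : b⁻¹ * a * b = a ^ r)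
    (hb : IsOfFinOrder b) (hdisj : Disjoint (zpowers a) (zpowers b)) :
    Nat.card (closure {a, b}) = orderOf a * orderOf b := by
  have hmem : ∀ p : zpowers a × zpowers b, (p.1 : G) * p.2 ∈ closure {a, b} := fun p => by
    rw [← SetLike.mem_coe, coe_closure_pair_eq_zpowers_mul_zpowers hab hb]
    exact Set.mul_mem_mul p.1.2 p.2.2
  have hbij : Function.Bijective
      (fun p => ⟨_, hmem p⟩ : zpowers a × zpowers b → closure {a, b}) := by
    refine ⟨fun p q h => mul_injective_of_disjoint hdisj (congrArg Subtype.val h), ?_⟩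
    rintro ⟨g, hg⟩
    rw [← SetLike.mem_coe, coe_closure_pair_eq_zpowers_mul_zpowers hab hb] at hg
    obtain ⟨x, hx, y, hy, rfl⟩ := hg
    exact ⟨(⟨x, hx⟩, ⟨y, hy⟩), rfl⟩
  rw [← Nat.card_eq_of_bijective _ hbij, Nat.card_prod, Nat.card_zpowers, Nat.card_zpowers]

theorem Subgroup.Normal.zpow_sub_one_mul_mem {H : Subgroup G} (hH : H.Normal)
    (hab : b⁻¹ * a * b = a ^ r) {s : ℤ} {l : ℕ} (h : a ^ s * b ^ l ∈ H) :
    a ^ ((r - 1) * s) ∈ H := by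
  have : a ^ ((r - 1) * s) = (b⁻¹ * (a ^ s * b ^ l) * b⁻¹⁻¹) * (a ^ s * b ^ l)⁻¹ := by
    rw [inv_inv, show b⁻¹ * (a ^ s * b ^ l) * b = (b⁻¹ * a ^ s * b) * b ^ l by group,
      inv_mul_zpow_mul hab]
    group
  rw [this]
  exact mul_mem (hH.conj_mem _ h _) (inv_mem h)

theorem Subgroup.Normal.zpow_pow_sub_one_mem {H : Subgroup G} (hH : H.Normal)
    (hab : b⁻¹ * a * b = a ^ r) {l : ℕ} (h : b ^ l ∈ H) : a ^ (r ^ l - 1) ∈ H := by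
  have := mul_mem (inv_mem h) (hH.conj_mem _ h a)
  rwa [mul_pow_mul_inv hab, inv_mul_cancel_left] at this

end Metacyclic

theorem Nat.Coprime.eq_and_eq_of_mul_eq_mul {m n x y x' y' : ℕ} (hco : m.Coprime n)
    (hx : x ∣ m) (hy : y ∣ n) (hx' : x' ∣ m) (hy' : y' ∣ n) (h : x * y = x' * y') :
    x = x' ∧ y = y' := by
  have gcd_eq {x y : ℕ} (hx : x ∣ m) (hy : y ∣ n) :
      Nat.gcd (x * y) m = x ∧ Nat.gcd (x * y) n = y :=
    ⟨by rw [Nat.Coprime.gcd_mul_right_cancel _ (hco.symm.coprime_dvd_left hy), Nat.gcd_eq_left hx],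
      by rw [Nat.Coprime.gcd_mul_left_cancel _ (hco.coprime_dvd_left hx), Nat.gcd_eq_left hy]⟩
  exact ⟨(gcd_eq hx hy).1.symm.trans (h ▸ (gcd_eq hx' hy').1),
    (gcd_eq hx hy).2.symm.trans (h ▸ (gcd_eq hx' hy').2)⟩

namespace ZM

variable {m n : ℕ} {r : ℤ}

theorem a_pow_eq_one : ZMa m n r ^ m = 1 := by
  simpa [ZMa, PresentedGroup.of] using
    PresentedGroup.one_of_mem (rels := ZMrels m n r) (x := FreeGroup.of true ^ m)
      (by simp [ZMrels])

theorem b_pow_eq_one : ZMb m n r ^ n = 1 := by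
  simpa [ZMb, PresentedGroup.of] using
    PresentedGroup.one_of_mem (rels := ZMrels m n r) (x := FreeGroup.of false ^ n)
      (by simp [ZMrels])

theorem b_inv_mul_a_mul_b : (ZMb m n r)⁻¹ * ZMa m n r * ZMb m n r = ZMa m n r ^ r := by
  have := PresentedGroup.one_of_mem (rels := ZMrels m n r)
    (x := (FreeGroup.of false)⁻¹ * FreeGroup.of true * FreeGroup.of false *
      FreeGroup.of true ^ (-r)) (by simp [ZMrels])
  simpa [ZMa, ZMb, PresentedGroup.of, zpow_neg, mul_inv_eq_one] using this

theorem closure_a_b : closure {ZMa m n r, ZMb m n r} = ⊤ :=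
  eq_top_iff.2 fun g _ => PresentedGroup.generated_by _ _
    (fun x => subset_closure (by cases x <;> simp [ZMa, ZMb])) g

section Lift

variable {G : Type*} [Group G] {x y : G}

def lift (hx : x ^ m = 1) (hy : y ^ n = 1) (hxy : y⁻¹ * x * y = x ^ r) : ZM m n r →* G :=
  PresentedGroup.toGroup (f := fun i => if i then x else y) (by
    rintro _ (rfl | rfl | rfl) <;> simp [hx, hy, hxy, zpow_neg])

variable (hx : x ^ m = 1) (hy : y ^ n = 1) (hxy : y⁻¹ * x * y = x ^ r)

@[simp]
theorem lift_a : lift hx hy hxy (ZMa m n r) = x := PresentedGroup.toGroup.of _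

@[simp]
theorem lift_b : lift hx hy hxy (ZMb m n r) = y := PresentedGroup.toGroup.of _

end Lift

theorem isOfFinOrder_b (hn : 0 < n) : IsOfFinOrder (ZMb m n r) :=
  isOfFinOrder_iff_pow_eq_one.2 ⟨n, hn, b_pow_eq_one⟩

theorem inv_pow_mul_pow_mul_pow {k l : ℕ} :
    (ZMb m n r ^ l)⁻¹ * ZMa m n r ^ k * ZMb m n r ^ l = (ZMa m n r ^ k) ^ (r ^ l) := by
  simpa [← zpow_natCast, ← zpow_mul, mul_comm] using
    inv_pow_mul_zpow_mul_pow b_inv_mul_a_mul_b l k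

theorem coe_closure_pow_pow (hn : 0 < n) (k l : ℕ) :
    (closure {ZMa m n r ^ k, ZMb m n r ^ l} : Set (ZM m n r)) =
      (zpowers (ZMa m n r ^ k) : Set (ZM m n r)) * zpowers (ZMb m n r ^ l) :=
  coe_closure_pair_eq_zpowers_mul_zpowers inv_pow_mul_pow_mul_pow (isOfFinOrder_b hn).pow

theorem exists_eq_zpow_mul_zpow (hn : 0 < n) (g : ZM m n r) :
    ∃ i j : ℤ, g = ZMa m n r ^ i * ZMb m n r ^ j := by
  have hg : g ∈ (closure {ZMa m n r ^ 1, ZMb m n r ^ 1} : Set (ZM m n r)) := by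
    simp [closure_a_b]
  rw [coe_closure_pow_pow hn] at hg
  obtain ⟨_, ⟨i, rfl⟩, _, ⟨j, rfl⟩, rfl⟩ := hg
  exact ⟨i, j, by simp⟩

theorem finite (hm : 0 < m) (hn : 0 < n) : Finite (ZM m n r) := by
  have ha : IsOfFinOrder (ZMa m n r) := isOfFinOrder_iff_pow_eq_one.2 ⟨m, hm, a_pow_eq_one⟩
  have huniv : (Set.univ : Set (ZM m n r)) =
      (zpowers (ZMa m n r) : Set (ZM m n r)) * zpowers (ZMb m n r) := by
    simpa [closure_a_b] using coe_closure_pow_pow (m := m) (r := r) hn 1 1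
  exact Set.finite_univ_iff.1 (huniv ▸ ha.finite_zpowers.mul (isOfFinOrder_b hn).finite_zpowers)

def toZMod : ZM m n r →* Multiplicative (ZMod n) :=
  lift (x := 1) (y := Multiplicative.ofAdd 1) (one_pow m)
    (by rw [← ofAdd_nsmul, nsmul_one, ZMod.natCast_self, ofAdd_zero]) (by simp)

@[simp]
theorem toZMod_a : toZMod (ZMa m n r) = 1 := lift_a ..

theorem toZMod_zpow_b (j : ℤ) : toZMod (ZMb m n r ^ j) = Multiplicative.ofAdd (j : ZMod n) := by
  simp [toZMod, ← ofAdd_zsmul]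

theorem orderOf_b : orderOf (ZMb m n r) = n := by
  refine Nat.dvd_antisymm (orderOf_dvd_of_pow_eq_one b_pow_eq_one) ?_
  have := orderOf_map_dvd (toZMod (m := m) (n := n) (r := r)) (ZMb m n r)
  simpa [toZMod, orderOf_ofAdd_eq_addOrderOf] using this

theorem disjoint_zpowers_a_b : Disjoint (zpowers (ZMa m n r)) (zpowers (ZMb m n r)) := by
  rw [disjoint_def]
  rintro _ ⟨i, hi : ZMa m n r ^ i = _⟩ ⟨j, rfl : ZMb m n r ^ j = _⟩
  have : (j : ZMod n) = 0 := by
    simpa [← hi] using (toZMod_zpow_b (m := m) (n := n) (r := r) j).symm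
  rw [ZMod.intCast_zmod_eq_zero_iff_dvd, ← orderOf_b (m := m) (n := n) (r := r)] at this
  exact orderOf_dvd_iff_zpow_eq_one.1 this

theorem orderOf_a (hn : 0 < n) (hr : (m : ℤ) ∣ r ^ n - 1) : orderOf (ZMa m n r) = m := by
  have hrn : (r : ZMod m) ^ n = 1 := by
    rw [← sub_eq_zero]; exact_mod_cast (ZMod.intCast_zmod_eq_zero_iff_dvd _ m).2 hr
  set u := (IsUnit.of_pow_eq_one hrn hn.ne').unit
  have hun : u ^ n = 1 := Units.ext (by simpa [u] using hrn)
  let f : ZM m n r →* Equiv.Perm (ZMod m) :=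
    lift (x := Equiv.addRight 1) (y := MulAction.toPerm u⁻¹)
      (by ext; simp)
      (by rw [← MulAction.toPermHom_apply, ← map_pow, inv_pow, hun, inv_one, map_one])
      (by ext; simp [u])
  refine Nat.dvd_antisymm (orderOf_dvd_of_pow_eq_one a_pow_eq_one) ?_
  refine dvd_trans ?_ (orderOf_map_dvd f (ZMa m n r))
  have h_eval : (Equiv.addRight (1 : ZMod m) ^ orderOf (f (ZMa m n r))) 0 = 0 := by
    simp [f, pow_orderOf_eq_one]
  simp only [f, lift_a, Equiv.nsmul_addRight, Equiv.coe_addRight, zero_add, nsmul_eq_mul,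
    mul_one] at h_eval
  exact (ZMod.natCast_eq_zero_iff _ _).1 h_eval

theorem card_closure_pow_pow (hm : 0 < m) (hn : 0 < n) (hr : (m : ℤ) ∣ r ^ n - 1) {k l : ℕ}
    (hk : k ∣ m) (hl : l ∣ n) :
    Nat.card (closure {ZMa m n r ^ k, ZMb m n r ^ l}) = m / k * (n / l) := by
  have hdisj : Disjoint (zpowers (ZMa m n r ^ k)) (zpowers (ZMb m n r ^ l)) :=
    disjoint_zpowers_a_b.mono (zpowers_le.2 (pow_mem (mem_zpowers _) k))
      (zpowers_le.2 (pow_mem (mem_zpowers _) l))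
  rw [card_closure_pair_eq_orderOf_mul_orderOf inv_pow_mul_pow_mul_pow (isOfFinOrder_b hn).pow
    hdisj, orderOf_pow_of_dvd (ne_zero_of_dvd_ne_zero hm.ne' hk) ((orderOf_a hn hr).symm ▸ hk),
    orderOf_pow_of_dvd (ne_zero_of_dvd_ne_zero hn.ne' hl) (orderOf_b.symm ▸ hl), orderOf_a hn hr,
    orderOf_b]

theorem normal_closure_pow_pow (hm : 0 < m) (hn : 0 < n) {k l : ℕ}
    (hkl : (k : ℤ) ∣ r ^ l - 1) :
    (closure {ZMa m n r ^ k, ZMb m n r ^ l}).Normal := by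
  have := finite (r := r) hm hn
  set N := closure {ZMa m n r ^ k, ZMb m n r ^ l}
  have ha_mem : ∀ t : ℤ, (k : ℤ) ∣ t → ZMa m n r ^ t ∈ N := by
    rintro _ ⟨t, rfl⟩
    rw [zpow_mul, zpow_natCast]
    exact zpow_mem (subset_closure (by simp)) t
  have hb_mem : ZMb m n r ^ l ∈ N := subset_closure (by simp)
  have ha : ZMa m n r ∈ normalizer (N : Set (ZM m n r)) := by
    refine mem_normalizer_closure_of_conj_mem ?_
    rintro _ (rfl | rfl)
    · rw [show ZMa m n r * ZMa m n r ^ k * (ZMa m n r)⁻¹ = ZMa m n r ^ k by group]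
      exact subset_closure (by simp)
    · rw [mul_pow_mul_inv b_inv_mul_a_mul_b]
      exact mul_mem hb_mem (ha_mem _ hkl)
  have hb : (ZMb m n r)⁻¹ ∈ normalizer (N : Set (ZM m n r)) := by
    refine mem_normalizer_closure_of_conj_mem ?_
    rintro _ (rfl | rfl)
    · rw [inv_inv, ← zpow_natCast, inv_mul_zpow_mul b_inv_mul_a_mul_b]
      exact ha_mem _ (dvd_mul_left _ _)
    · rw [show (ZMb m n r)⁻¹ * ZMb m n r ^ l * (ZMb m n r)⁻¹⁻¹ = ZMb m n r ^ l by group]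
      exact hb_mem
  rw [← normalizer_eq_top_iff, eq_top_iff, ← closure_a_b, closure_le]
  rintro _ (rfl | rfl)
  · exact ha
  · simpa using inv_mem hb

theorem exists_eq_closure_of_normal (hn : 0 < n) (hco2 : IsCoprime (m : ℤ) (r - 1))
    {H : Subgroup (ZM m n r)} (hH : H.Normal) :
    ∃ k l : ℕ, l ∣ n ∧ k ∣ Int.gcd (m : ℤ) (r ^ l - 1) ∧
      H = closure {ZMa m n r ^ k, ZMb m n r ^ l} := by
  obtain ⟨k, hk⟩ := H.exists_zpow_mem_iff_dvd (ZMa m n r)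
  obtain ⟨l, hl⟩ := (zpowers (ZMa m n r) ⊔ H).exists_zpow_mem_iff_dvd (ZMb m n r)
  have hkm : (k : ℤ) ∣ m := (hk m).1 (by simp [a_pow_eq_one])
  have hln : (l : ℤ) ∣ n := (hl n).1 (by simp [b_pow_eq_one])
  obtain ⟨s, hs⟩ := mem_zpowers_sup_iff.1 ((hl l).2 dvd_rfl)
  rw [zpow_natCast] at hs
  have hks : (k : ℤ) ∣ s := (hco2.of_isCoprime_of_dvd_left hkm).dvd_of_dvd_mul_left
    ((hk _).1 (hH.zpow_sub_one_mul_mem b_inv_mul_a_mul_b hs))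
  have hbl : ZMb m n r ^ l ∈ H := by
    simpa using mul_mem (inv_mem ((hk s).2 hks)) hs
  have hkr : (k : ℤ) ∣ r ^ l - 1 := (hk _).1 (hH.zpow_pow_sub_one_mem b_inv_mul_a_mul_b hbl)
  refine ⟨k, l, by exact_mod_cast hln, Int.dvd_gcd hkm hkr, le_antisymm (fun g hg => ?_) ?_⟩
  · obtain ⟨i, j, rfl⟩ := exists_eq_zpow_mul_zpow hn g
    obtain ⟨j', rfl⟩ := (hl j).1 (mem_zpowers_sup_iff.2 ⟨i, hg⟩)
    have hbj : ZMb m n r ^ ((l : ℤ) * j') ∈ H := by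
      rw [zpow_mul, zpow_natCast]
      exact zpow_mem hbl j'
    obtain ⟨i', rfl⟩ := (hk i).1 (by simpa using mul_mem hg (inv_mem hbj))
    rw [← SetLike.mem_coe, coe_closure_pow_pow hn]
    exact Set.mul_mem_mul ⟨i', by simp [zpow_mul]⟩ ⟨j', by simp [zpow_mul]⟩
  · rw [closure_le]
    rintro _ (rfl | rfl)
    · simpa using (hk k).2 dvd_rfl
    · exact hbl

theorem eq_of_normal_of_card_eq (hm : 0 < m) (hn : 0 < n) (hco : Nat.Coprime m n)
    (hco2 : IsCoprime (m : ℤ) (r - 1)) (hr : (m : ℤ) ∣ r ^ n - 1) {H K : Subgroup (ZM m n r)}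
    (hH : H.Normal) (hK : K.Normal) (hcard : Nat.card H = Nat.card K) : H = K := by
  obtain ⟨k, l, hl, hk, rfl⟩ := exists_eq_closure_of_normal hn hco2 hH
  obtain ⟨k', l', hl', hk', rfl⟩ := exists_eq_closure_of_normal hn hco2 hK
  have hkm : k ∣ m := hk.trans (Nat.gcd_dvd_left _ _)
  have hkm' : k' ∣ m := hk'.trans (Nat.gcd_dvd_left _ _)
  rw [card_closure_pow_pow hm hn hr hkm hl, card_closure_pow_pow hm hn hr hkm' hl'] at hcard
  obtain ⟨hk_eq, hl_eq⟩ := hco.eq_and_eq_of_mul_eq_mul (Nat.div_dvd_of_dvd hkm)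
    (Nat.div_dvd_of_dvd hl) (Nat.div_dvd_of_dvd hkm') (Nat.div_dvd_of_dvd hl') hcard
  rw [(Nat.div_eq_iff_eq_of_dvd_dvd hm.ne' hkm hkm').1 hk_eq,
    (Nat.div_eq_iff_eq_of_dvd_dvd hn.ne' hl hl').1 hl_eq]

end ZM

theorem stmt5 (m n : ℕ) (r : ℤ) (hm : 0 < m) (hn : 0 < n)
    (hco : Nat.Coprime m n) (hco2 : IsCoprime (m : ℤ) (r - 1))
    (hr : (m : ℤ) ∣ r ^ n - 1) :
    (∀ H : Subgroup (ZM m n r), H.Normal →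
      ∃ m₁ n₁ : ℕ, n₁ ∣ n ∧ m₁ ∣ Int.gcd (m : ℤ) (r ^ n₁ - 1) ∧
        H = Subgroup.closure {ZMa m n r ^ m₁, ZMb m n r ^ n₁}) ∧
    (∀ m₁ n₁ : ℕ, n₁ ∣ n → m₁ ∣ Int.gcd (m : ℤ) (r ^ n₁ - 1) →
      (Subgroup.closure {ZMa m n r ^ m₁, ZMb m n r ^ n₁} : Subgroup (ZM m n r)).Normal) ∧
    (∀ m₁ n₁ : ℕ, m₁ ∣ m → n₁ ∣ n →
      ∀ H K : Subgroup (ZM m n r), H.Normal → K.Normal →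
        Nat.card H = m * n / (m₁ * n₁) → Nat.card K = m * n / (m₁ * n₁) → H = K) :=
  ⟨fun _ hH => ZM.exists_eq_closure_of_normal hn hco2 hH,
    fun _ _ _ hm₁ => ZM.normal_closure_pow_pow hm hn
      ((Int.natCast_dvd_natCast.2 hm₁).trans (Int.gcd_dvd_right _ _)),
    fun _ _ _ _ _ _ hH hK hHcard hKcard =>
      ZM.eq_of_normal_of_card_eq hm hn hco hco2 hr hH hK (hHcard.trans hKcard.symm)⟩
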